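/- arXiv:1906.02021 — 2 statements merged into one kernel-verified Lean document; each statement's English description precedes it below -/
import Mathlib

section
/- Let G be a finite weighted planar graph with vertices a, b, c, d in cyclic order on a face F, and S a subset of the vertices of F disjoint from {a,b,c,d} that is both a,c-separated and b,d-separated. Then M_f(G∖{b})·M_f(G∖{a,c,d}) + M_f(G∖{d})·M_f(G∖{a,b,c}) = M_f(G∖{a})·M_f(G∖{b,c,d}) + M_f(G∖{a,b,d})·M_f(G∖{c}). -/
open scoped Classical

variable {V : Type*} [Fintype V] [DecidableEq V] {R : Type*} [CommRing R]

/-- `M` is a matching of the induced subgraph of `G` on the vertex set `A`: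
a set of edges of `G` contained in `A` that are pairwise vertex-disjoint. -/
def IsMatchingOn (G : SimpleGraph V) (A : Finset V) (M : Finset (Sym2 V)) : Prop :=
  (∀ e ∈ M, e ∈ G.edgeSet) ∧ (∀ e ∈ M, ∀ v ∈ e, v ∈ A) ∧
  (∀ e ∈ M, ∀ f ∈ M, e ≠ f → ∀ v : V, v ∈ e → v ∉ f)

/-- `Mf G w S A` is the total weight (weight of a matching = product of its edge weights)
of all matchings of the induced subgraph of `G` on `A` in which every vertex of `A` not
belonging to the distinguished ("free") set `S` is matched. -/
noncomputable def Mf (G : SimpleGraph V) (w : Sym2 V → R) (S A : Finset V) : R :=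
  ∑ M ∈ Finset.univ.filter
      (fun M : Finset (Sym2 V) =>
        IsMatchingOn G A M ∧ ∀ v ∈ A, v ∉ S → ∃ e ∈ M, v ∈ e),
    ∏ e ∈ M, w e

/-- Two walks are (vertex-)disjoint. -/
def WalkDisjoint {G : SimpleGraph V} {u v u' v' : V} (P : G.Walk u v) (Q : G.Walk u' v') : Prop :=
  ∀ z : V, z ∈ P.support → z ∉ Q.support

/-- `S` is `a,c`-separated (relative to `b` and `d`): there is no triple of mutually
vertex-disjoint paths `P₁ : a — c`, `P₂ : b — s`, `P₃ : d — t` with `s ≠ t` in `S`. -/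
def Separated (G : SimpleGraph V) (S : Finset V) (a b c d : V) : Prop :=
  ¬ ∃ (s t : V) (P₁ : G.Walk a c) (P₂ : G.Walk b s) (P₃ : G.Walk d t),
      s ∈ S ∧ t ∈ S ∧ s ≠ t ∧ P₁.IsPath ∧ P₂.IsPath ∧ P₃.IsPath ∧
      WalkDisjoint P₁ P₂ ∧ WalkDisjoint P₁ P₃ ∧ WalkDisjoint P₂ P₃

/-- `L` is the boundary cycle of a face of a planar embedding of `G`, on which the four
vertices `a`, `b`, `c`, `d` occur in this cyclic order.  Planarity of the embedding is
encoded through its characteristic combinatorial consequence: two pairs of vertices that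
interleave on the boundary cycle of a face can never be joined by two vertex-disjoint
paths of `G`. -/
structure FaceConfig (G : SimpleGraph V) (L : List V) (a b c d : V) : Prop where
  nodup : L.Nodup
  cyclic : ∃ L' : List V, L ~r L' ∧ ∃ i j k l : Fin L'.length,
      i < j ∧ j < k ∧ k < l ∧ L'.get i = a ∧ L'.get j = b ∧ L'.get k = c ∧ L'.get l = d
  noncrossing : ∀ L' : List V, L ~r L' → ∀ i j k l : Fin L'.length, i < j → j < k → k < l →
      ¬ ∃ (P : G.Walk (L'.get i) (L'.get k)) (Q : G.Walk (L'.get j) (L'.get l)),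
          P.IsPath ∧ Q.IsPath ∧ WalkDisjoint P Q

/-!
Superimpose a matching counted by `Mf G w S (univ \ X)` and one counted by
`Mf G w S (univ \ Y)`, where `X ⊔ Y = {a, b, c, d}`. In the graph of their symmetric difference
every vertex has degree at most two, the corners `a, b, c, d` have degree one and all other
vertices outside `S` have even degree. Since a connected graph on `n` vertices has at least
`n - 1` edges, a component contains at most two corners; by the handshake lemma, a component
containing exactly one corner also contains a vertex of `S`. Exchanging the two matchings along a
union of components gives another admissible pair with the same weight and the same symmetric
difference. Planarity and the two separation hypotheses forbid a component joining `a` to `c`,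
and one joining `b` to `d` when `a` is joined to no corner. So one can always exchange along the
component of `a` if it contains `b` or `d`, else along that of `b` if it contains `c`, else along
that of `c` if it contains `d`, else along those of `a` and `b`; this is a weight-preserving
involution between the pairs counted on the two sides of the identity.
-/

open Finset
open scoped symmDiff

theorem Finset.card_symmDiff_add_two_mul_card_inter {α : Type*} [DecidableEq α]
    (s t : Finset α) : #(s ∆ t) + 2 * #(s ∩ t) = #s + #t := by
  rw [symmDiff_eq_sup_sdiff_inf, sup_eq_union, inf_eq_inter,
    card_sdiff_of_subset inter_subset_union, ← card_union_add_card_inter]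
  have := card_le_card (inter_subset_union (s := s) (t := t))
  omega

namespace SimpleGraph

section Degree

variable {W : Type*} [Fintype W] {H : SimpleGraph W} [DecidableRel H.Adj]

theorem Connected.card_filter_degree_eq_one_le_two (hconn : H.Connected)
    (hdeg : ∀ v, H.degree v ≤ 2) : #{v | H.degree v = 1} ≤ 2 := by
  have hedges : Fintype.card W ≤ #H.edgeFinset + 1 := by
    simpa [Nat.card_eq_fintype_card, edgeFinset_card] using hconn.card_vert_le_card_edgeSet_add_one
  -- `2 * (#W - 1) ≤ ∑ v, H.degree v ≤ 2 * #W - #{v | H.degree v = 1}`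
  have hsum : ∑ v, (H.degree v + if H.degree v = 1 then 1 else 0) ≤ ∑ _v : W, 2 :=
    sum_le_sum fun v _ => by have := hdeg v; split_ifs <;> omega
  rw [sum_add_distrib, sum_degrees_eq_twice_card_edges, ← card_filter, sum_const, card_univ,
    smul_eq_mul] at hsum
  omega

theorem ConnectedComponent.degree_toSimpleGraph (K : H.ConnectedComponent) (v : K) :
    K.toSimpleGraph.degree v = H.degree v := by
  unfold toSimpleGraph
  convert degree_induce_of_neighborSet_subset fun _ hw => (K.mem_supp_congr_adj hw).mp v.2
  exact Iff.rfl

theorem exists_ne_reachable_odd_degree {u : W} (hu : Odd (H.degree u)) :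
    ∃ v ≠ u, H.Reachable u v ∧ Odd (H.degree v) := by
  set K := H.connectedComponentMk u
  by_contra! hK
  have hodd : ({v : K | Odd (K.toSimpleGraph.degree v)} : Finset K) = {⟨u, rfl⟩} := by
    ext v
    simp only [mem_filter, mem_univ, true_and, mem_singleton, K.degree_toSimpleGraph]
    refine ⟨fun hv => Subtype.ext ?_, fun hv => hv ▸ hu⟩
    by_contra hne
    exact hK v hne (ConnectedComponent.exact v.2).symm hv
  simpa [hodd] using K.toSimpleGraph.even_card_odd_degree_vertices

theorem not_reachable_of_degree_eq_one (hdeg : ∀ v, H.degree v ≤ 2) {u v w : W}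
    (huv : u ≠ v) (huw : u ≠ w) (hvw : v ≠ w)
    (hu : H.degree u = 1) (hv : H.degree v = 1) (hw : H.degree w = 1)
    (hreach : H.Reachable u v) : ¬H.Reachable u w := by
  intro hreach'
  set K := H.connectedComponentMk u
  have hle := K.connected_toSimpleGraph.card_filter_degree_eq_one_le_two
    fun x => (K.degree_toSimpleGraph x).trans_le (hdeg x)
  have hsub : ({⟨u, rfl⟩, ⟨v, (ConnectedComponent.sound hreach).symm⟩,
      ⟨w, (ConnectedComponent.sound hreach').symm⟩} : Finset K) ⊆
      ({x : K | K.toSimpleGraph.degree x = 1} : Finset K) := by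
    intro x hx
    simp only [mem_insert, mem_singleton] at hx
    simp only [mem_filter, mem_univ, true_and, K.degree_toSimpleGraph]
    rcases hx with rfl | rfl | rfl <;> assumption
  have := (card_le_card hsub).trans hle
  rw [card_insert_of_notMem (by simp [Subtype.ext_iff, huv, huw]),
    card_pair (by simpa [Subtype.ext_iff] using hvw)] at this
  omega

end Degree

theorem Reachable.exists_isPath_support_reachable {W : Type*} {G H : SimpleGraph W}
    (hle : H ≤ G) {u v : W} (h : H.Reachable u v) :
    ∃ p : G.Walk u v, p.IsPath ∧ ∀ z ∈ p.support, H.Reachable u z := by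
  classical
  obtain ⟨q⟩ := h
  refine ⟨q.bypass.mapLe hle, q.bypass_isPath.mapLe hle, fun z hz => ?_⟩
  rw [Walk.support_mapLe_eq_support] at hz
  exact ⟨q.bypass.takeUntil z hz⟩

end SimpleGraph

theorem walkDisjoint_of_not_reachable {W : Type*} {G H : SimpleGraph W} {u v u' v' : W}
    {p : G.Walk u v} {q : G.Walk u' v'} (hp : ∀ z ∈ p.support, H.Reachable u z)
    (hq : ∀ z ∈ q.support, H.Reachable u' z) (h : ¬H.Reachable u u') : WalkDisjoint p q :=
  fun z hzp hzq => h ((hp z hzp).trans (hq z hzq).symm)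

namespace FreeBoundaryKuo

variable {V : Type*}

section Matchings

variable {G : SimpleGraph V} {S A : Finset V} {M : Finset (Sym2 V)}

def IsMfMatching (G : SimpleGraph V) (S A : Finset V) (M : Finset (Sym2 V)) : Prop :=
  IsMatchingOn G A M ∧ ∀ v ∈ A, v ∉ S → ∃ e ∈ M, v ∈ e

theorem IsMfMatching.of_forall_mem_iff (N : V → Finset (Sym2 V)) (B : V → Finset V)
    (hN : ∀ v, IsMfMatching G S (B v) (N v)) (hA : ∀ v, v ∈ A ↔ v ∈ B v)
    (hM : ∀ v e, v ∈ e → (e ∈ M ↔ e ∈ N v)) : IsMfMatching G S A M := by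
  refine ⟨⟨fun e he => ?_, fun e he v hv => ?_, fun e he f hf hef v hve hvf => ?_⟩,
    fun v hv hvS => ?_⟩
  · induction e using Sym2.ind with
    | h u w => exact (hN u).1.1 _ ((hM u _ (Sym2.mem_mk_left u w)).1 he)
  · exact (hA v).2 ((hN v).1.2.1 e ((hM v e hv).1 he) v hv)
  · exact (hN v).1.2.2 e ((hM v e hve).1 he) f ((hM v f hvf).1 hf) hef v hve hvf
  · obtain ⟨e, he, hve⟩ := (hN v).2 v ((hA v).1 hv) hvS
    exact ⟨e, (hM v e hve).2 he, hve⟩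

variable [DecidableEq V]

theorem IsMfMatching.card_filter_mem_le_one (hM : IsMfMatching G S A M) (v : V) :
    #{e ∈ M | v ∈ e} ≤ 1 := by
  refine card_le_one.2 fun e he f hf => ?_
  rw [mem_filter] at he hf
  by_contra hef
  exact hM.1.2.2 e he.1 f hf.1 hef v he.2 hf.2

theorem IsMfMatching.card_filter_mem (hM : IsMfMatching G S A M) {v : V} (hv : v ∉ S) :
    #{e ∈ M | v ∈ e} = if v ∈ A then 1 else 0 := by
  split_ifs with hvA
  · obtain ⟨e, he, hve⟩ := hM.2 v hvA hv
    exact le_antisymm (hM.card_filter_mem_le_one v) (card_pos.2 ⟨e, mem_filter.2 ⟨he, hve⟩⟩)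
  · exact card_eq_zero.2 <| filter_eq_empty_iff.2 fun e he hve => hvA (hM.1.2.1 e he v hve)

end Matchings

def pairWeight {R : Type*} [CommRing R] (w : Sym2 V → R)
    (x : Finset (Sym2 V) × Finset (Sym2 V)) : R :=
  (∏ e ∈ x.1, w e) * ∏ e ∈ x.2, w e

theorem pairWeight_swap {R : Type*} [CommRing R] (w : Sym2 V → R)
    (x : Finset (Sym2 V) × Finset (Sym2 V)) : pairWeight w x.swap = pairWeight w x :=
  mul_comm _ _

section Pairs

variable [Fintype V] {G : SimpleGraph V} {S : Finset V}
  {x : Finset (Sym2 V) × Finset (Sym2 V)}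

noncomputable def mfPairs (G : SimpleGraph V) (S A B : Finset V) :
    Finset (Finset (Sym2 V) × Finset (Sym2 V)) :=
  univ.filter (IsMfMatching G S A) ×ˢ univ.filter (IsMfMatching G S B)

theorem mem_mfPairs {A B : Finset V} :
    x ∈ mfPairs G S A B ↔ IsMfMatching G S A x.1 ∧ IsMfMatching G S B x.2 := by
  simp [mfPairs]

theorem disjoint_mfPairs {A₁ A₂ B₁ B₂ : Finset V} {v : V} (hv₁ : v ∉ A₁) (hv₂ : v ∈ A₂)
    (hvS : v ∉ S) : Disjoint (mfPairs G S A₁ B₁) (mfPairs G S A₂ B₂) := by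
  refine disjoint_left.2 fun x hx₁ hx₂ => ?_
  obtain ⟨e, he, hve⟩ := (mem_mfPairs.1 hx₂).1.2 v hv₂ hvS
  exact hv₁ ((mem_mfPairs.1 hx₁).1.1.2.1 e he v hve)

theorem Mf_mul_Mf [DecidableEq V] {R : Type*} [CommRing R] (G : SimpleGraph V)
    (w : Sym2 V → R) (S A B : Finset V) :
    Mf G w S A * Mf G w S B = ∑ x ∈ mfPairs G S A B, pairWeight w x := by
  rw [Mf, Mf, sum_mul_sum, ← sum_product']
  congr 1
  ext x
  simp [mem_mfPairs, IsMfMatching]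

end Pairs

section Swap

variable [DecidableEq V] {C : Finset V} {x : Finset (Sym2 V) × Finset (Sym2 V)}

def diffGraph (x : Finset (Sym2 V) × Finset (Sym2 V)) : SimpleGraph V :=
  SimpleGraph.fromEdgeSet ↑(x.1 ∆ x.2)

theorem diffGraph_adj {u v : V} : (diffGraph x).Adj u v ↔ s(u, v) ∈ x.1 ∆ x.2 ∧ u ≠ v := by
  simp [diffGraph, Set.mem_symmDiff, mem_symmDiff]

theorem diffGraph_swap (x : Finset (Sym2 V) × Finset (Sym2 V)) :
    diffGraph x.swap = diffGraph x := by
  rw [diffGraph, diffGraph, Prod.fst_swap, Prod.snd_swap, symmDiff_comm]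

noncomputable def swapEdges (C : Finset V) (x : Finset (Sym2 V) × Finset (Sym2 V)) :
    Finset (Sym2 V) :=
  {e ∈ x.1 ∆ x.2 | ∃ v ∈ e, v ∈ C}

noncomputable def swapAlong (C : Finset V) (x : Finset (Sym2 V) × Finset (Sym2 V)) :
    Finset (Sym2 V) × Finset (Sym2 V) :=
  (x.1 ∆ swapEdges C x, x.2 ∆ swapEdges C x)

theorem symmDiff_swapAlong : (swapAlong C x).1 ∆ (swapAlong C x).2 = x.1 ∆ x.2 := by
  rw [swapAlong, symmDiff_symmDiff_symmDiff_comm, symmDiff_self, symmDiff_bot]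

theorem diffGraph_swapAlong : diffGraph (swapAlong C x) = diffGraph x := by
  rw [diffGraph, symmDiff_swapAlong, diffGraph]

theorem swapAlong_swapAlong : swapAlong C (swapAlong C x) = x := by
  have : swapEdges C (swapAlong C x) = swapEdges C x := by
    rw [swapEdges, symmDiff_swapAlong, swapEdges]
  rw [swapAlong, this, swapAlong, symmDiff_symmDiff_cancel_right,
    symmDiff_symmDiff_cancel_right]

theorem swapAlong_swap : swapAlong C x.swap = (swapAlong C x).swap := by
  have : swapEdges C x.swap = swapEdges C x := by
    rw [swapEdges, swapEdges, Prod.fst_swap, Prod.snd_swap, symmDiff_comm]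
  rw [swapAlong, this, swapAlong]
  rfl

theorem pairWeight_swapAlong {R : Type*} [CommRing R] (w : Sym2 V → R) :
    pairWeight w (swapAlong C x) = pairWeight w x := by
  have hE : swapEdges C x ⊆ x.1 ∆ x.2 := filter_subset _ _
  have hunion : (swapAlong C x).1 ∪ (swapAlong C x).2 = x.1 ∪ x.2 := by
    ext e
    have := @hE e
    simp only [swapAlong, mem_union, mem_symmDiff] at this ⊢
    tauto
  have hinter : (swapAlong C x).1 ∩ (swapAlong C x).2 = x.1 ∩ x.2 := by
    ext e
    have := @hE e
    simp only [swapAlong, mem_inter, mem_symmDiff] at this ⊢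
    tauto
  rw [pairWeight, pairWeight, ← prod_union_inter, hunion, hinter, prod_union_inter]

theorem mem_swapAlong_fst_iff (hC : ∀ ⦃u v⦄, (diffGraph x).Adj u v → u ∈ C → v ∈ C)
    {e : Sym2 V} {z : V} (hz : z ∈ e) :
    e ∈ (swapAlong C x).1 ↔ e ∈ if z ∈ C then x.2 else x.1 := by
  have hE : e ∈ swapEdges C x ↔ e ∈ x.1 ∆ x.2 ∧ z ∈ C := by
    refine ⟨fun he => ⟨(mem_filter.1 he).1, ?_⟩, fun he => mem_filter.2 ⟨he.1, z, hz, he.2⟩⟩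
    obtain ⟨heD, v, hv, hvC⟩ := mem_filter.1 he
    rcases eq_or_ne v z with rfl | hvz
    · exact hvC
    · refine hC (diffGraph_adj.2 ⟨?_, hvz⟩) hvC
      rwa [← Sym2.mem_and_mem_iff hvz |>.1 ⟨hv, hz⟩]
  split_ifs with hzC <;> simp only [swapAlong, mem_symmDiff, hE, hzC] <;> tauto

end Swap

section Superposition

variable [Fintype V] [DecidableEq V] {G : SimpleGraph V} {S : Finset V}
  {C : Finset V} {x : Finset (Sym2 V) × Finset (Sym2 V)}

theorem swapAlong_mem_mfPairs {A B : Finset V}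
    (hC : ∀ ⦃u v⦄, (diffGraph x).Adj u v → u ∈ C → v ∈ C) (hx : x ∈ mfPairs G S A B) :
    swapAlong C x ∈ mfPairs G S (A \ C ∪ B ∩ C) (B \ C ∪ A ∩ C) := by
  obtain ⟨hA, hB⟩ := mem_mfPairs.1 hx
  have hC' : ∀ ⦃u v⦄, (diffGraph x.swap).Adj u v → u ∈ C → v ∈ C := by
    rwa [diffGraph_swap]
  refine mem_mfPairs.2 ⟨?_, ?_⟩
  · refine .of_forall_mem_iff (fun v => if v ∈ C then x.2 else x.1)
      (fun v => if v ∈ C then B else A) (fun v => by split_ifs <;> assumption)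
      (fun v => by split_ifs with hv <;> simp [hv]) fun v e hv => mem_swapAlong_fst_iff hC hv
  · refine .of_forall_mem_iff (fun v => if v ∈ C then x.1 else x.2)
      (fun v => if v ∈ C then A else B) (fun v => by split_ifs <;> assumption)
      (fun v => by split_ifs with hv <;> simp [hv]) fun v e hv => ?_
    simpa [swapAlong_swap] using mem_swapAlong_fst_iff hC' hv

noncomputable def kuoPairs (G : SimpleGraph V) (S T X : Finset V) :
    Finset (Finset (Sym2 V) × Finset (Sym2 V)) :=
  mfPairs G S (univ \ X) (univ \ (T \ X))

theorem Mf_mul_Mf_eq_sum_kuoPairs {R : Type*} [CommRing R] (w : Sym2 V → R)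
    {T X Y : Finset V} (h : T \ X = Y) :
    Mf G w S (univ \ X) * Mf G w S (univ \ Y) = ∑ x ∈ kuoPairs G S T X, pairWeight w x := by
  rw [kuoPairs, h, Mf_mul_Mf]

theorem swapAlong_mem_kuoPairs {T X : Finset V} (hX : X ⊆ T)
    (hC : ∀ ⦃u v⦄, (diffGraph x).Adj u v → u ∈ C → v ∈ C) (hx : x ∈ kuoPairs G S T X) :
    swapAlong C x ∈ kuoPairs G S T (X ∆ (T ∩ C)) := by
  have h := swapAlong_mem_mfPairs hC hx
  have h₁ : (univ \ X) \ C ∪ (univ \ (T \ X)) ∩ C = univ \ (X ∆ (T ∩ C)) := by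
    ext v
    have := @hX v
    simp only [mem_union, mem_sdiff, mem_inter, mem_univ, mem_symmDiff] at this ⊢
    tauto
  have h₂ : (univ \ (T \ X)) \ C ∪ (univ \ X) ∩ C = univ \ (T \ (X ∆ (T ∩ C))) := by
    ext v
    have := @hX v
    simp only [mem_union, mem_sdiff, mem_inter, mem_univ, mem_symmDiff] at this ⊢
    tauto
  rwa [h₁, h₂] at h

theorem swap_mem_kuoPairs {T X : Finset V} (hX : X ⊆ T) (hx : x ∈ kuoPairs G S T X) :
    x.swap ∈ kuoPairs G S T (T \ X) := by
  rw [kuoPairs, Finset.sdiff_sdiff_eq_self hX]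
  exact mem_mfPairs.2 (mem_mfPairs.1 hx).symm

theorem swap_swapAlong_mem_kuoPairs {T X : Finset V} (hX : X ⊆ T)
    (hC : ∀ ⦃u v⦄, (diffGraph x).Adj u v → u ∈ C → v ∈ C) (hx : x ∈ kuoPairs G S T X) :
    (swapAlong C x).swap ∈ kuoPairs G S T (X ∆ (T \ C)) := by
  have hsub : X ∆ (T ∩ C) ⊆ T := fun v hv => by
    rcases mem_symmDiff.1 hv with ⟨hv, -⟩ | ⟨hv, -⟩
    exacts [hX hv, mem_of_mem_inter_left hv]
  have h := swap_mem_kuoPairs hsub (swapAlong_mem_kuoPairs hX hC hx)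
  have hT : T \ (X ∆ (T ∩ C)) = X ∆ (T \ C) := by
    ext v
    have := @hX v
    simp only [mem_sdiff, mem_symmDiff, mem_inter] at this ⊢
    tauto
  rwa [hT] at h

theorem degree_diffGraph_add {A B : Finset V} (hx : x ∈ mfPairs G S A B) (v : V) :
    (diffGraph x).degree v + 2 * #({e ∈ x.1 | v ∈ e} ∩ {e ∈ x.2 | v ∈ e}) =
      #{e ∈ x.1 | v ∈ e} + #{e ∈ x.2 | v ∈ e} := by
  obtain ⟨hA, hB⟩ := mem_mfPairs.1 hx
  have hinc : (diffGraph x).incidenceFinset v = {e ∈ x.1 | v ∈ e} ∆ {e ∈ x.2 | v ∈ e} := by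
    ext e
    -- `fromEdgeSet` drops loops, and matchings of `G` have none
    have hdiag : e ∈ x.1 ∆ x.2 → ¬e.IsDiag := by
      rw [mem_symmDiff]
      rintro (⟨he, -⟩ | ⟨he, -⟩)
      exacts [G.not_isDiag_of_mem_edgeSet (hA.1.1 e he), G.not_isDiag_of_mem_edgeSet (hB.1.1 e he)]
    simp only [mem_symmDiff, mem_filter] at hdiag ⊢
    rw [SimpleGraph.incidenceFinset, Set.mem_toFinset]
    simp [SimpleGraph.incidenceSet, diffGraph, Set.mem_symmDiff]
    tauto
  rw [← SimpleGraph.card_incidenceFinset_eq_degree, hinc,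
    card_symmDiff_add_two_mul_card_inter]

/-- An abstraction of the superposition `diffGraph x` of two matchings; `T` is the set of
corners. -/
structure IsCornerGraph (G H : SimpleGraph V) (S T : Finset V) : Prop where
  le : H ≤ G
  degree_le_two : ∀ v, H.degree v ≤ 2
  degree_eq_one : ∀ v ∈ T, H.degree v = 1
  even_degree : ∀ v ∉ T, v ∉ S → Even (H.degree v)

theorem isCornerGraph_diffGraph {T X : Finset V} (hST : Disjoint S T) (hX : X ⊆ T)
    (hx : x ∈ kuoPairs G S T X) : IsCornerGraph G (diffGraph x) S T := by
  obtain ⟨h₁, h₂⟩ := mem_mfPairs.1 hx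
  have hcard := degree_diffGraph_add hx
  refine ⟨fun u v huv => ?_, fun v => ?_, fun v hv => ?_, fun v hvT hvS => ?_⟩
  · obtain ⟨he, -⟩ := diffGraph_adj.1 huv
    rcases mem_symmDiff.1 he with ⟨he, -⟩ | ⟨he, -⟩
    exacts [h₁.1.1 _ he, h₂.1.1 _ he]
  · have := hcard v
    have := h₁.card_filter_mem_le_one v
    have := h₂.card_filter_mem_le_one v
    omega
  · have hvS : v ∉ S := disjoint_right.1 hST hv
    have := hcard v
    rw [h₁.card_filter_mem hvS, h₂.card_filter_mem hvS] at this
    by_cases hvX : v ∈ X <;> simp [hvX, hv] at this <;> omega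
  · have := hcard v
    rw [h₁.card_filter_mem hvS, h₂.card_filter_mem hvS] at this
    have hvX : v ∉ X := fun h => hvT (hX h)
    simp only [mem_sdiff, mem_univ, hvX, hvT, false_and, not_false_eq_true, and_self,
      if_true] at this
    exact Nat.even_iff.2 (by omega)

end Superposition

namespace IsCornerGraph

variable [Fintype V] {G H : SimpleGraph V} {S T : Finset V}

theorem not_reachable_of_reachable (hH : IsCornerGraph G H S T) {u v w : V}
    (hu : u ∈ T) (hv : v ∈ T) (hw : w ∈ T) (huv : u ≠ v) (huw : u ≠ w) (hvw : v ≠ w)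
    (h : H.Reachable u v) : ¬H.Reachable u w :=
  H.not_reachable_of_degree_eq_one hH.degree_le_two huv huw hvw (hH.degree_eq_one u hu)
    (hH.degree_eq_one v hv) (hH.degree_eq_one w hw) h

theorem exists_mem_reachable (hH : IsCornerGraph G H S T) {u : V} (hu : u ∈ T)
    (halone : ∀ v ∈ T, v ≠ u → ¬H.Reachable u v) : ∃ s ∈ S, H.Reachable u s := by
  obtain ⟨v, hvu, huv, hodd⟩ :=
    H.exists_ne_reachable_odd_degree (u := u) (by rw [hH.degree_eq_one u hu]; exact odd_one)
  by_cases hvT : v ∈ T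
  · exact absurd huv (halone v hvT hvu)
  by_cases hvS : v ∈ S
  · exact ⟨v, hvS, huv⟩
  · exact absurd (hH.even_degree v hvT hvS) (Nat.not_even_iff_odd.2 hodd)

variable [DecidableEq V] {a b c d : V}

theorem not_reachable_ac (hH : IsCornerGraph G H S {a, b, c, d})
    (hab : a ≠ b) (hac : a ≠ c) (had : a ≠ d) (hbc : b ≠ c) (hcd : c ≠ d)
    (hNC : ¬∃ (P : G.Walk a c) (Q : G.Walk b d), P.IsPath ∧ Q.IsPath ∧ WalkDisjoint P Q)
    (hAC : Separated G S a b c d) : ¬H.Reachable a c := by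
  intro hJac
  have hJab : ¬H.Reachable a b := hH.not_reachable_of_reachable (by simp) (by simp) (by simp)
    hac hab hbc.symm hJac
  have hJad : ¬H.Reachable a d := hH.not_reachable_of_reachable (by simp) (by simp) (by simp)
    hac had hcd hJac
  have hJcb : ¬H.Reachable c b := hH.not_reachable_of_reachable (by simp) (by simp) (by simp)
    hac.symm hbc.symm hab hJac.symm
  have hJcd : ¬H.Reachable c d := hH.not_reachable_of_reachable (by simp) (by simp) (by simp)
    hac.symm hcd had hJac.symm
  obtain ⟨p, hp, hpJ⟩ := hJac.exists_isPath_support_reachable hH.le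
  -- `b` and `d` are joined either to each other or to two distinct vertices of `S`
  by_cases hJbd : H.Reachable b d
  · obtain ⟨q, hq, hqJ⟩ := hJbd.exists_isPath_support_reachable hH.le
    exact hNC ⟨p, q, hp, hq, walkDisjoint_of_not_reachable hpJ hqJ hJab⟩
  obtain ⟨s, hs, hJbs⟩ := hH.exists_mem_reachable (u := b) (by simp) (by
    simp only [mem_insert, mem_singleton]
    rintro v (rfl | rfl | rfl | rfl) hv
    exacts [fun h => hJab h.symm, (hv rfl).elim, fun h => hJcb h.symm, hJbd])
  obtain ⟨t, ht, hJdt⟩ := hH.exists_mem_reachable (u := d) (by simp) (by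
    simp only [mem_insert, mem_singleton]
    rintro v (rfl | rfl | rfl | rfl) hv
    exacts [fun h => hJad h.symm, fun h => hJbd h.symm, fun h => hJcd h.symm, (hv rfl).elim])
  obtain ⟨q, hq, hqJ⟩ := hJbs.exists_isPath_support_reachable hH.le
  obtain ⟨r, hr, hrJ⟩ := hJdt.exists_isPath_support_reachable hH.le
  have hst : s ≠ t := by
    rintro rfl
    exact hJbd (hJbs.trans hJdt.symm)
  exact hAC ⟨s, t, p, q, r, hs, ht, hst, hp, hq, hr, walkDisjoint_of_not_reachable hpJ hqJ hJab,
    walkDisjoint_of_not_reachable hpJ hrJ hJad, walkDisjoint_of_not_reachable hqJ hrJ hJbd⟩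

end IsCornerGraph

structure IsKuoConfiguration (G : SimpleGraph V) (S : Finset V) (a b c d : V) : Prop where
  ne_ab : a ≠ b
  ne_ac : a ≠ c
  ne_ad : a ≠ d
  ne_bc : b ≠ c
  ne_bd : b ≠ d
  ne_cd : c ≠ d
  not_disjoint_paths :
    ¬∃ (P : G.Walk a c) (Q : G.Walk b d), P.IsPath ∧ Q.IsPath ∧ WalkDisjoint P Q
  separated_ac : Separated G S a b c d
  separated_bd : Separated G S b c d a

section Involution

variable [Fintype V] [DecidableEq V] {G H : SimpleGraph V} {S : Finset V} {a b c d : V}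

theorem IsCornerGraph.not_reachable_bd (hH : IsCornerGraph G H S {a, b, c, d})
    (hK : IsKuoConfiguration G S a b c d) (hJab : ¬H.Reachable a b) (hJad : ¬H.Reachable a d) :
    ¬H.Reachable b d := by
  intro hJbd
  have hJac := hH.not_reachable_ac hK.ne_ab hK.ne_ac hK.ne_ad hK.ne_bc hK.ne_cd
    hK.not_disjoint_paths hK.separated_ac
  have hJbc : ¬H.Reachable b c := hH.not_reachable_of_reachable (by simp) (by simp) (by simp)
    hK.ne_bd hK.ne_bc hK.ne_cd.symm hJbd
  have hJdc : ¬H.Reachable d c := hH.not_reachable_of_reachable (by simp) (by simp) (by simp)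
    hK.ne_bd.symm hK.ne_cd.symm hK.ne_bc hJbd.symm
  obtain ⟨s, hs, hJas⟩ := hH.exists_mem_reachable (u := a) (by simp) (by
    simp only [mem_insert, mem_singleton]
    rintro v (rfl | rfl | rfl | rfl) hv
    exacts [(hv rfl).elim, hJab, hJac, hJad])
  obtain ⟨t, ht, hJct⟩ := hH.exists_mem_reachable (u := c) (by simp) (by
    simp only [mem_insert, mem_singleton]
    rintro v (rfl | rfl | rfl | rfl) hv
    exacts [fun h => hJac h.symm, fun h => hJbc h.symm, (hv rfl).elim, fun h => hJdc h.symm])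
  obtain ⟨p, hp, hpJ⟩ := hJbd.exists_isPath_support_reachable hH.le
  obtain ⟨q, hq, hqJ⟩ := hJct.exists_isPath_support_reachable hH.le
  obtain ⟨r, hr, hrJ⟩ := hJas.exists_isPath_support_reachable hH.le
  have hts : t ≠ s := by
    rintro rfl
    exact hJac (hJas.trans hJct.symm)
  exact hK.separated_bd ⟨t, s, p, q, r, ht, hs, hts, hp, hq, hr,
    walkDisjoint_of_not_reachable hpJ hqJ hJbc,
    walkDisjoint_of_not_reachable hpJ hrJ fun h => hJab h.symm,
    walkDisjoint_of_not_reachable hqJ hrJ fun h => hJac h.symm⟩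

noncomputable def kuoSwapSet (H : SimpleGraph V) (a b c d : V) : Finset V :=
  if H.Reachable a b ∨ H.Reachable a d then univ.filter (H.Reachable a)
  else if H.Reachable b c then univ.filter (H.Reachable b)
  else if H.Reachable c d then univ.filter (H.Reachable c)
  else univ.filter fun v => H.Reachable a v ∨ H.Reachable b v

theorem kuoSwapSet_closed {u v : V} (huv : H.Adj u v) (hu : u ∈ kuoSwapSet H a b c d) :
    v ∈ kuoSwapSet H a b c d := by
  unfold kuoSwapSet at hu ⊢
  split_ifs at hu ⊢ <;> simp only [mem_filter, mem_univ, true_and] at hu ⊢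
  · exact hu.trans huv.reachable
  · exact hu.trans huv.reachable
  · exact hu.trans huv.reachable
  · exact hu.imp (·.trans huv.reachable) (·.trans huv.reachable)

/-- Whichever set is swapped, the corners that change sides form `{a, b}` or `{a, d}`, once the
two matchings are renamed when `c` moves (as `kuoMap` does). -/
theorem IsCornerGraph.kuoSwapSet_cases (hH : IsCornerGraph G H S {a, b, c, d})
    (hK : IsKuoConfiguration G S a b c d) :
    (c ∉ kuoSwapSet H a b c d ∧ {a, b, c, d} ∩ kuoSwapSet H a b c d = {a, b}) ∨
      (c ∉ kuoSwapSet H a b c d ∧ {a, b, c, d} ∩ kuoSwapSet H a b c d = {a, d}) ∨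
      (c ∈ kuoSwapSet H a b c d ∧ {a, b, c, d} \ kuoSwapSet H a b c d = {a, d}) ∨
      (c ∈ kuoSwapSet H a b c d ∧ {a, b, c, d} \ kuoSwapSet H a b c d = {a, b}) := by
  have ⟨hab, hac, had, hbc, hbd, hcd, hNC, hAC, _⟩ := hK
  have hJac := hH.not_reachable_ac hab hac had hbc hcd hNC hAC
  rw [← filter_mem_eq_inter, sdiff_eq_filter, kuoSwapSet]
  split_ifs with h₁ h₂ h₃
  · rcases h₁ with hJab | hJad
    · have hJad := hH.not_reachable_of_reachable (by simp) (by simp) (by simp) hab had hbd hJab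
      left
      simp [filter_insert, filter_singleton, hJab, hJac, hJad]
    · have hJab := hH.not_reachable_of_reachable (by simp) (by simp) (by simp) had hab hbd.symm hJad
      right; left
      simp [filter_insert, filter_singleton, hJab, hJac, hJad]
  · obtain ⟨hJab, hJad⟩ := not_or.1 h₁
    have hJbd := hH.not_reachable_of_reachable (by simp) (by simp) (by simp) hbc hbd hcd h₂
    right; right; left
    simp [filter_insert, filter_singleton, h₂, hJbd, mt SimpleGraph.Reachable.symm hJab]
  · right; right; right
    simp [filter_insert, filter_singleton, h₃, mt SimpleGraph.Reachable.symm hJac,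
      mt SimpleGraph.Reachable.symm h₂]
  · obtain ⟨hJab, hJad⟩ := not_or.1 h₁
    have hJbd := hH.not_reachable_bd hK hJab hJad
    left
    simp [filter_insert, filter_singleton, hJab, hJac, hJad, h₂, hJbd,
      mt SimpleGraph.Reachable.symm hJab]

/-- Renaming the two matchings when `c` changes sides keeps `c` deleted from the second one. -/
noncomputable def kuoMap (a b c d : V) (x : Finset (Sym2 V) × Finset (Sym2 V)) :
    Finset (Sym2 V) × Finset (Sym2 V) :=
  if c ∈ kuoSwapSet (diffGraph x) a b c d then (swapAlong (kuoSwapSet (diffGraph x) a b c d) x).swap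
  else swapAlong (kuoSwapSet (diffGraph x) a b c d) x

variable {x : Finset (Sym2 V) × Finset (Sym2 V)}

theorem diffGraph_kuoMap : diffGraph (kuoMap a b c d x) = diffGraph x := by
  unfold kuoMap
  split_ifs <;> simp only [diffGraph_swap, diffGraph_swapAlong]

theorem kuoMap_kuoMap : kuoMap a b c d (kuoMap a b c d x) = x := by
  have hC : kuoSwapSet (diffGraph (kuoMap a b c d x)) a b c d =
      kuoSwapSet (diffGraph x) a b c d := by
    rw [diffGraph_kuoMap]
  rw [kuoMap, hC]
  unfold kuoMap
  split_ifs <;> simp only [swapAlong_swap, Prod.swap_swap, swapAlong_swapAlong]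

theorem pairWeight_kuoMap {R : Type*} [CommRing R] (w : Sym2 V → R) :
    pairWeight w (kuoMap a b c d x) = pairWeight w x := by
  unfold kuoMap
  split_ifs <;> simp only [pairWeight_swap, pairWeight_swapAlong]

theorem kuoMap_mem_kuoPairs {X : Finset V} (hS : Disjoint S {a, b, c, d})
    (hK : IsKuoConfiguration G S a b c d) (hX : X ⊆ {a, b, c, d})
    (hx : x ∈ kuoPairs G S {a, b, c, d} X) :
    kuoMap a b c d x ∈ kuoPairs G S {a, b, c, d} (X ∆ {a, b}) ∨
      kuoMap a b c d x ∈ kuoPairs G S {a, b, c, d} (X ∆ {a, d}) := by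
  have hC : ∀ ⦃u v⦄, (diffGraph x).Adj u v → u ∈ kuoSwapSet (diffGraph x) a b c d →
      v ∈ kuoSwapSet (diffGraph x) a b c d := fun _ _ => kuoSwapSet_closed
  rcases (isCornerGraph_diffGraph hS hX hx).kuoSwapSet_cases hK
    with ⟨hc, h⟩ | ⟨hc, h⟩ | ⟨hc, h⟩ | ⟨hc, h⟩
  · left
    rw [kuoMap, if_neg hc, ← h]
    exact swapAlong_mem_kuoPairs hX hC hx
  · right
    rw [kuoMap, if_neg hc, ← h]
    exact swapAlong_mem_kuoPairs hX hC hx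
  · right
    rw [kuoMap, if_pos hc, ← h]
    exact swap_swapAlong_mem_kuoPairs hX hC hx
  · left
    rw [kuoMap, if_pos hc, ← h]
    exact swap_swapAlong_mem_kuoPairs hX hC hx

theorem kuoMap_mem_union {X Y Z : Finset V} (hS : Disjoint S {a, b, c, d})
    (hK : IsKuoConfiguration G S a b c d) (hX : X ⊆ {a, b, c, d})
    (hY : X ∆ {a, b} = Y ∨ X ∆ {a, b} = Z) (hZ : X ∆ {a, d} = Y ∨ X ∆ {a, d} = Z)
    (hx : x ∈ kuoPairs G S {a, b, c, d} X) :
    kuoMap a b c d x ∈ kuoPairs G S {a, b, c, d} Y ∪ kuoPairs G S {a, b, c, d} Z := by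
  rw [mem_union]
  rcases kuoMap_mem_kuoPairs hS hK hX hx with h | h
  · rcases hY with rfl | rfl
    exacts [.inl h, .inr h]
  · rcases hZ with rfl | rfl
    exacts [.inl h, .inr h]

theorem sum_kuoPairs_add_sum_kuoPairs {R : Type*} [CommRing R] (w : Sym2 V → R)
    (hS : Disjoint S {a, b, c, d}) (hK : IsKuoConfiguration G S a b c d) :
    ∑ x ∈ kuoPairs G S {a, b, c, d} {b}, pairWeight w x +
        ∑ x ∈ kuoPairs G S {a, b, c, d} {d}, pairWeight w x =
      ∑ x ∈ kuoPairs G S {a, b, c, d} {a}, pairWeight w x +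
        ∑ x ∈ kuoPairs G S {a, b, c, d} {a, b, d}, pairWeight w x := by
  have hbS : b ∉ S := disjoint_right.1 hS (by simp)
  have hdisj₁ : Disjoint (kuoPairs G S {a, b, c, d} {b}) (kuoPairs G S {a, b, c, d} {d}) :=
    disjoint_mfPairs (by simp) (by simp [hK.ne_bd]) hbS
  have hdisj₂ : Disjoint (kuoPairs G S {a, b, c, d} {a}) (kuoPairs G S {a, b, c, d} {a, b, d}) :=
    (disjoint_mfPairs (by simp) (by simp [hK.ne_ab.symm]) hbS).symm
  rw [← sum_union hdisj₁, ← sum_union hdisj₂]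
  have ⟨hab, _, had, _, hbd, _, _, _, _⟩ := hK
  refine sum_nbij' (kuoMap a b c d) (kuoMap a b c d) ?_ ?_ (fun _ _ => kuoMap_kuoMap)
    (fun _ _ => kuoMap_kuoMap) fun _ _ => (pairWeight_kuoMap w).symm
  all_goals
    intro x hx
    rcases mem_union.1 hx with hx | hx
  · refine kuoMap_mem_union hS hK (by simp) (.inl ?_) (.inr ?_) hx <;>
      ext z <;> simp only [mem_symmDiff, mem_insert, mem_singleton] <;> grind
  · refine kuoMap_mem_union hS hK (by simp) (.inr ?_) (.inl ?_) hx <;>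
      ext z <;> simp only [mem_symmDiff, mem_insert, mem_singleton] <;> grind
  · refine kuoMap_mem_union hS hK (by simp) (.inl ?_) (.inr ?_) hx <;>
      ext z <;> simp only [mem_symmDiff, mem_insert, mem_singleton] <;> grind
  · refine kuoMap_mem_union hS hK (by simp [insert_subset_iff]) (.inr ?_) (.inl ?_) hx <;>
      ext z <;> simp only [mem_symmDiff, mem_insert, mem_singleton] <;> grind

end Involution

end FreeBoundaryKuo

open FreeBoundaryKuo

theorem FaceConfig.isKuoConfiguration {V : Type*} {G : SimpleGraph V} {L : List V}
    {S : Finset V} {a b c d : V} (hface : FaceConfig G L a b c d)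
    (hAC : Separated G S a b c d) (hBD : Separated G S b c d a) :
    IsKuoConfiguration G S a b c d := by
  obtain ⟨L', hrot, i, j, k, l, hij, hjk, hkl, rfl, rfl, rfl, rfl⟩ := hface.cyclic
  have hinj : ∀ {p q : Fin L'.length}, L'.get p = L'.get q ↔ p = q :=
    (hrot.nodup_iff.1 hface.nodup).get_inj_iff
  refine ⟨?_, ?_, ?_, ?_, ?_, ?_, hface.noncrossing L' hrot i j k l hij hjk hkl, hAC, hBD⟩ <;>
    rw [Ne, hinj] <;> apply ne_of_lt <;> order

theorem free_boundary_kuo_four_term_odd_general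
    (G : SimpleGraph V) (w : Sym2 V → R) (L : List V) (S : Finset V) (a b c d : V)
    (hface : FaceConfig G L a b c d)
    (hdisj : Disjoint S ({a, b, c, d} : Finset V))
    (hsepAC : Separated G S a b c d)
    (hsepBD : Separated G S b c d a) :
    Mf G w S (Finset.univ \ {b}) * Mf G w S (Finset.univ \ {a, c, d}) +
      Mf G w S (Finset.univ \ {d}) * Mf G w S (Finset.univ \ {a, b, c}) =
    Mf G w S (Finset.univ \ {a}) * Mf G w S (Finset.univ \ {b, c, d}) +
      Mf G w S (Finset.univ \ {a, b, d}) * Mf G w S (Finset.univ \ {c}) := by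
  have hK := hface.isKuoConfiguration hsepAC hsepBD
  have ⟨hab, hac, had, hbc, hbd, hcd, _, _, _⟩ := hK
  rw [Mf_mul_Mf_eq_sum_kuoPairs w (T := {a, b, c, d}) (by ext; simp; grind),
    Mf_mul_Mf_eq_sum_kuoPairs w (T := {a, b, c, d}) (by ext; simp; grind),
    Mf_mul_Mf_eq_sum_kuoPairs w (T := {a, b, c, d}) (by ext; simp; grind),
    Mf_mul_Mf_eq_sum_kuoPairs w (T := {a, b, c, d}) (by ext; simp; grind)]
  exact sum_kuoPairs_add_sum_kuoPairs w hdisj hK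

/-- **Free-boundary Kuo condensation, second four-term version** (Corollary 2, eq. (4)).
If the free set `S` on the face is both `a,c`-separated and `b,d`-separated, then the
four-term identity for deletions of an odd number of the vertices `a,b,c,d` holds. -/
theorem free_boundary_kuo_four_term_odd
    (G : SimpleGraph V) (w : Sym2 V → R) (L : List V) (S : Finset V) (a b c d : V)
    (hface : FaceConfig G L a b c d)
    (hSL : ∀ s ∈ S, s ∈ L)
    (hdisj : Disjoint S ({a, b, c, d} : Finset V))
    (hsepAC : Separated G S a b c d)
    (hsepBD : Separated G S b c d a) :
    Mf G w S (Finset.univ \ {b}) * Mf G w S (Finset.univ \ {a, c, d}) +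
      Mf G w S (Finset.univ \ {d}) * Mf G w S (Finset.univ \ {a, b, c}) =
    Mf G w S (Finset.univ \ {a}) * Mf G w S (Finset.univ \ {b, c, d}) +
      Mf G w S (Finset.univ \ {a, b, d}) * Mf G w S (Finset.univ \ {c}) :=
  free_boundary_kuo_four_term_odd_general G w L S a b c d hface hdisj hsepAC hsepBD
end

section
/- For fixed nonnegative integer k, as x → ∞ the double product P₃ = ∏_{i=1}^{x-k-1} ∏_{j=2}^{i} (2k+i+j-1)/(i+j-1) satisfies P₃ ∼ Γ(3)Γ(5)⋯Γ(2k+1) · 2^{2kx - k(k+2)} · π^{-k/2} · x^{-k(k+3/2)}. -/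
/-!
Each inner product is a ratio of factorials, and the identity
`∏_{i<n} f(i+m)/f(i) = ∏_{i<m} f(i+n)/f(i)` turns the outer product into one with `k` factors
instead of `n = x - k - 1`: `P₃ = ∏_{t<k} (2t+2)! (2n+2t+1)! / ((n+2t+1)! (n+2t+2)!)`.
Each factor is then estimated by `(n+m)! ∼ n! n^m` and the central binomial asymptotic
`(2n)! / n!² ∼ 4^n / √(πn)`, a consequence of Stirling's formula.
-/

open Filter Asymptotics Finset Real
open scoped Nat

/-- The paper's `P₃`, indexed by the upper limit `n = x - k - 1` of the outer product. -/
noncomputable def P3 (k n : ℕ) : ℝ :=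
  ∏ i ∈ Icc 1 n, ∏ j ∈ Icc 2 i, (2 * (k : ℝ) + i + j - 1) / ((i : ℝ) + j - 1)

noncomputable def p3Asymptote (k : ℕ) (x : ℝ) : ℝ :=
  (∏ i ∈ Icc 1 k, Gamma (2 * (i : ℝ) + 1)) * (2 : ℝ) ^ (2 * (k : ℝ) * x - (k : ℝ) * (k + 2)) /
    π ^ ((k : ℝ) / 2) * x ^ (-((k : ℝ) * ((k : ℝ) + 3 / 2)))

theorem prod_Icc_one_eq_prod_range {M : Type*} [CommMonoid M] (f : ℕ → M) (n : ℕ) :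
    ∏ i ∈ Icc 1 n, f i = ∏ i ∈ range n, f (i + 1) := by
  induction n with
  | zero => simp
  | succ n ih => rw [prod_Icc_succ_top (by omega), ih, prod_range_succ]

theorem prod_range_two_mul {M : Type*} [CommMonoid M] (f : ℕ → M) (k : ℕ) :
    ∏ m ∈ range (2 * k), f m = ∏ t ∈ range k, f (2 * t) * f (2 * t + 1) := by
  induction k with
  | zero => simp
  | succ k ih => rw [mul_add_one, prod_range_succ, prod_range_succ, ih, prod_range_succ, mul_assoc]

theorem prod_range_shift_div_comm {G : Type*} [CommGroupWithZero G] {f : ℕ → G}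
    (hf : ∀ i, f i ≠ 0) (m n : ℕ) :
    ∏ i ∈ range n, f (i + m) / f i = ∏ i ∈ range m, f (i + n) / f i := by
  have hprod : ∀ s : Finset ℕ, ∏ i ∈ s, f i ≠ 0 := fun s => prod_ne_zero_iff.2 fun i _ => hf i
  rw [prod_div_distrib, prod_div_distrib, div_eq_div_iff (hprod _) (hprod _)]
  simp_rw [add_comm _ m, add_comm _ n]
  rw [mul_comm, ← prod_range_add, mul_comm, ← prod_range_add, add_comm]

theorem prod_Icc_two_natCast_add (a i : ℕ) :
    ∏ j ∈ Icc 2 (i + 1), ((a + j : ℕ) : ℝ) = (a + i + 1)! / (a + 1)! := by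
  induction i with
  | zero => simp [Nat.factorial_ne_zero]
  | succ i ih =>
    rw [prod_Icc_succ_top (by omega), ih, show a + (i + 1) + 1 = a + i + 1 + 1 by ring,
      Nat.factorial_succ (a + i + 1)]
    push_cast
    ring

theorem P3_inner_prod_eq (k t : ℕ) :
    ∏ j ∈ Icc 2 (t + 1), (2 * (k : ℝ) + ((t + 1 : ℕ) : ℝ) + j - 1) / (((t + 1 : ℕ) : ℝ) + j - 1)
      = (2 * (t + k) + 1)! / (2 * t + 1)! * ((t + 1)! / (t + 2 * k + 1)!) := by
  have hterm : ∀ j : ℕ, (2 * (k : ℝ) + ((t + 1 : ℕ) : ℝ) + j - 1) / (((t + 1 : ℕ) : ℝ) + j - 1)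
      = ((2 * k + t + j : ℕ) : ℝ) / ((t + j : ℕ) : ℝ) := fun j => by push_cast; ring_nf
  simp_rw [hterm, prod_div_distrib, prod_Icc_two_natCast_add]
  rw [show 2 * k + t + t + 1 = 2 * (t + k) + 1 by ring, show 2 * k + t + 1 = t + 2 * k + 1 by ring,
    show t + t + 1 = 2 * t + 1 by ring]
  field_simp

theorem P3_eq_prod (k n : ℕ) :
    P3 k n = ∏ t ∈ range k,
      ((2 * t + 2)! : ℝ) * ((2 * n + 2 * t + 1)! / ((n + 2 * t + 1)! * (n + 2 * t + 2)!)) := by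
  have hfac : ∀ m : ℕ, ((m ! : ℕ) : ℝ) ≠ 0 := fun m => Nat.cast_ne_zero.2 m.factorial_ne_zero
  have hodd : ∏ t ∈ range n, ((2 * (t + k) + 1)! / (2 * t + 1)! : ℝ)
      = ∏ t ∈ range k, ((2 * (t + n) + 1)! / (2 * t + 1)! : ℝ) :=
    prod_range_shift_div_comm (f := fun t => ((2 * t + 1)! : ℝ)) (fun t => hfac _) k n
  have hfactorials : ∏ t ∈ range n, ((t + 1)! / (t + 2 * k + 1)! : ℝ)
      = ∏ m ∈ range (2 * k), ((m + 1)! / (m + n + 1)! : ℝ) := by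
    have := prod_range_shift_div_comm (f := fun t => ((t + 1)! : ℝ)) (fun t => hfac _) (2 * k) n
    rw [← inv_inj, ← prod_inv_distrib, ← prod_inv_distrib]
    simpa only [inv_div] using this
  rw [P3, prod_Icc_one_eq_prod_range, prod_congr rfl fun t _ => P3_inner_prod_eq k t,
    prod_mul_distrib, hodd, hfactorials, prod_range_two_mul, ← prod_mul_distrib]
  refine prod_congr rfl fun t _ => ?_
  rw [show 2 * (t + n) + 1 = 2 * n + 2 * t + 1 by ring, show 2 * t + 1 + 1 = 2 * t + 2 by ring,
    show 2 * t + n + 1 = n + 2 * t + 1 by ring, show 2 * t + 1 + n + 1 = n + 2 * t + 2 by ring]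
  field_simp

theorem natCast_add_isEquivalent (c : ℝ) :
    (fun n : ℕ => (n : ℝ) + c) ~[atTop] fun n => (n : ℝ) :=
  IsEquivalent.refl.add_const_of_norm_tendsto_atTop
    (tendsto_norm_atTop_atTop.comp tendsto_natCast_atTop_atTop)

theorem factorial_add_isEquivalent (m : ℕ) :
    (fun n : ℕ => ((n + m)! : ℝ)) ~[atTop] fun n => n ! * (n : ℝ) ^ m := by
  induction m with
  | zero => simpa using IsEquivalent.refl
  | succ m ih =>
    refine ((natCast_add_isEquivalent (m + 1)).mul ih).congr_left (.of_eq ?_)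
      |>.congr_right (.of_eq ?_)
    · ext n; simp only [Pi.mul_apply]; rw [← Nat.add_assoc, Nat.factorial_succ]; push_cast; ring
    · ext n; simp only [Pi.mul_apply]; ring

theorem factorial_two_mul_div_sq_isEquivalent :
    (fun n : ℕ => ((2 * n)! : ℝ) / (n ! : ℝ) ^ 2) ~[atTop] fun n => 4 ^ n / √(π * n) := by
  have h := ((Stirling.factorial_isEquivalent_stirling.comp_tendsto
    (tendsto_id.const_mul_atTop' two_pos)).div (Stirling.factorial_isEquivalent_stirling.pow 2))
  refine h.congr_right ?_
  filter_upwards [eventually_gt_atTop 0] with n hn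
  simp only [Function.comp, Pi.div_apply, Pi.pow_apply, id]
  push_cast
  rw [mul_pow, div_pow, div_pow, div_pow, ← pow_mul, ← pow_mul, mul_pow, pow_mul (2 : ℝ),
    sq_sqrt (by positivity), show 2 * (2 * n) * π = 2 ^ 2 * (π * n) by ring,
    sqrt_mul (by positivity), sqrt_sq (by norm_num)]
  field_simp
  rw [sq_sqrt (by positivity)]
  ring

theorem factorial_two_mul_add_div_isEquivalent (a b c : ℕ) :
    (fun n : ℕ => ((2 * n + a)! : ℝ) / ((n + b)! * (n + c)!)) ~[atTop]
      fun n => 4 ^ n * (2 * n) ^ a / (√(π * n) * n ^ b * n ^ c) := by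
  have h := ((factorial_add_isEquivalent a).comp_tendsto (tendsto_id.const_mul_atTop' two_pos)).div
    ((factorial_add_isEquivalent b).mul (factorial_add_isEquivalent c))
  have h' := factorial_two_mul_div_sq_isEquivalent.mul
    (IsEquivalent.refl (u := fun n : ℕ => (2 * n : ℝ) ^ a / (n ^ b * n ^ c)))
  refine (h.congr_right (.of_eq ?_)).trans (h'.congr_right (.of_eq ?_))
  · ext n; simp only [Function.comp, Pi.div_apply, Pi.mul_apply, id]; push_cast; ring
  · ext n; simp only [Pi.mul_apply]; ring

theorem prod_Icc_Gamma_two_mul_add_one (k : ℕ) :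
    ∏ i ∈ Icc 1 k, Gamma (2 * (i : ℝ) + 1) = ∏ t ∈ range k, ((2 * t + 2)! : ℝ) := by
  rw [prod_Icc_one_eq_prod_range]
  refine prod_congr rfl fun t _ => ?_
  rw [show 2 * ((t + 1 : ℕ) : ℝ) + 1 = ((2 * t + 2 : ℕ) : ℝ) + 1 by push_cast; ring,
    Gamma_nat_eq_factorial]

theorem prod_range_central_asymptote_eq (k n : ℕ) (hn : 0 < n) :
    ∏ t ∈ range k,
        (4 ^ n * (2 * n : ℝ) ^ (2 * t + 1) / (√(π * n) * n ^ (2 * t + 1) * n ^ (2 * t + 2)))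
      = 2 ^ (2 * (k : ℝ) * (n + k + 1) - k * (k + 2)) / π ^ ((k : ℝ) / 2)
        * (n : ℝ) ^ (-((k : ℝ) * (k + 3 / 2))) := by
  have hsums :
      ∑ t ∈ range k, (2 * (n : ℝ) + 2 * t + 1) = 2 * (k : ℝ) * (n + k + 1) - k * (k + 2) ∧
      ∑ t ∈ range k, (-(2 * (t : ℝ) + 5 / 2)) = -((k : ℝ) * (k + 3 / 2)) := by
    induction k with
    | zero => simp
    | succ k ih =>
      simp only [sum_range_succ, ih.1, ih.2]
      push_cast
      constructor <;> ring
  have hn' : (0 : ℝ) < n := by exact_mod_cast hn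
  have hterm : ∀ t : ℕ,
      4 ^ n * (2 * n : ℝ) ^ (2 * t + 1) / (√(π * n) * n ^ (2 * t + 1) * n ^ (2 * t + 2))
      = 2 ^ (2 * (n : ℝ) + 2 * t + 1) / π ^ (1 / 2 : ℝ) * (n : ℝ) ^ (-(2 * (t : ℝ) + 5 / 2)) := by
    intro t
    rw [show 2 * (n : ℝ) + 2 * t + 1 = ((2 * n + 2 * t + 1 : ℕ) : ℝ) by push_cast; ring,
      rpow_natCast, ← sqrt_eq_rpow, rpow_neg hn'.le,
      show 2 * (t : ℝ) + 5 / 2 = ((2 * t + 2 : ℕ) : ℝ) + 1 / 2 by push_cast; ring,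
      rpow_add hn', rpow_natCast, ← sqrt_eq_rpow, sqrt_mul pi_pos.le,
      show (4 : ℝ) ^ n = 2 ^ (2 * n) by rw [pow_mul]; norm_num]
    field_simp
    ring
  simp_rw [hterm, prod_mul_distrib, prod_div_distrib, ← rpow_sum_of_pos two_pos,
    ← rpow_sum_of_pos pi_pos, ← rpow_sum_of_pos hn', hsums.1, hsums.2, sum_const, card_range,
    nsmul_eq_mul]
  ring_nf

theorem P3_isEquivalent (k : ℕ) :
    (fun n => P3 k n) ~[atTop] fun n : ℕ => p3Asymptote k (n + k + 1) := by
  have hfactor : (fun n => P3 k n) ~[atTop] fun n : ℕ => ∏ t ∈ range k, ((2 * t + 2)! : ℝ) *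
      (4 ^ n * (2 * n : ℝ) ^ (2 * t + 1) / (√(π * n) * n ^ (2 * t + 1) * n ^ (2 * t + 2))) := by
    simp_rw [P3_eq_prod]
    refine IsEquivalent.finsetProd fun t _ => IsEquivalent.refl.mul ?_
    simpa only [← add_assoc] using
      factorial_two_mul_add_div_isEquivalent (2 * t + 1) (2 * t + 1) (2 * t + 2)
  have hshift : (fun n : ℕ => (n : ℝ) ^ (-((k : ℝ) * (k + 3 / 2)))) ~[atTop]
      fun n => ((n : ℝ) + k + 1) ^ (-((k : ℝ) * (k + 3 / 2))) := by
    simpa only [add_assoc, Pi.pow_def] using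
      (natCast_add_isEquivalent (k + 1)).symm.rpow (fun n => by positivity)
  refine hfactor.trans ((IsEquivalent.refl.mul hshift).congr_left ?_)
  filter_upwards [eventually_gt_atTop 0] with n hn
  rw [Pi.mul_apply, prod_mul_distrib, prod_range_central_asymptote_eq k n hn,
    ← prod_Icc_Gamma_two_mul_add_one]
  ring

/-- For fixed `k ≥ 0`, as `x → ∞`,
`P₃ = ∏_{i=1}^{x-k-1} ∏_{j=2}^{i} (2k+i+j-1)/(i+j-1)
    ∼ Γ(3)Γ(5)⋯Γ(2k+1) · 2^{2kx-k(k+2)} · π^{-k/2} · x^{-k(k+3/2)}`. -/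
theorem P3_asymptotics (k : ℕ) :
    (fun x : ℕ => ∏ i ∈ Finset.Icc 1 (x - k - 1), ∏ j ∈ Finset.Icc 2 i,
        (2 * (k : ℝ) + i + j - 1) / ((i : ℝ) + j - 1)) ~[atTop]
    (fun x : ℕ =>
      (∏ i ∈ Finset.Icc 1 k, Real.Gamma (2 * (i : ℝ) + 1)) *
        (2 : ℝ) ^ (2 * (k : ℝ) * x - (k : ℝ) * (k + 2)) / Real.pi ^ ((k : ℝ) / 2) *
        (x : ℝ) ^ (-((k : ℝ) * ((k : ℝ) + 3 / 2)))) := by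
  refine ((P3_isEquivalent k).comp_tendsto
    ((tendsto_sub_atTop_nat 1).comp (tendsto_sub_atTop_nat k))).congr_right ?_
  filter_upwards [eventually_ge_atTop (k + 1)] with x hx
  have hx' : ((x - k - 1 : ℕ) : ℝ) + k + 1 = x := by
    rw [Nat.cast_sub (by omega), Nat.cast_sub (by omega)]; ring
  simp only [Function.comp_apply, hx', p3Asymptote]
end
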